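/- Let n ≥ 1 and σ > 0, and set γ₊ = [[−σ·Iₙ, 0], [0, 1]]. Then the linear isometry group { a ∈ GL(n+1, ℝ) : aᵀ γ₊ a = γ₊ } (the Lorentz group of the metric γ₊) equals { k · exp(Z) : k ∈ K, Z ∈ 𝔭_σ } (its Cartan decomposition). -/

import Mathlib

open Matrix

noncomputable section

abbrev Idx (n : ℕ) := Fin n ⊕ Unit

/-- K = { [[R,0],[0,ε]] : R ∈ O(n), ε = ±1 } -/
def Kset (n : ℕ) : Set (Matrix (Idx n) (Idx n) ℝ) :=
  { m | ∃ (R : Matrix (Fin n) (Fin n) ℝ) (ε : ℝ),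
      Rᵀ * R = 1 ∧ (ε = 1 ∨ ε = -1) ∧
      m = fromBlocks R 0 0 (ε • (1 : Matrix Unit Unit ℝ)) }

/-- 𝔭_σ -/
def pSet (n : ℕ) (σ : ℝ) : Set (Matrix (Idx n) (Idx n) ℝ) :=
  { m | ∃ b : Fin n → ℝ,
      m = fromBlocks 0 (replicateCol Unit b) (σ • replicateRow Unit b) 0 }

/-- γ₊ = [[−σ·Iₙ, 0], [0, 1]] -/
def gammaPlus (n : ℕ) (σ : ℝ) : Matrix (Idx n) (Idx n) ℝ :=
  fromBlocks ((-σ) • (1 : Matrix (Fin n) (Fin n) ℝ)) 0 0 (1 : Matrix Unit Unit ℝ)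

/-!
A `γ₊`-isometry `a` also satisfies `a γ₊⁻¹ aᵀ = γ₊⁻¹`, so its last row `(c, d)` lies on the
hyperboloid `d² - σ⁻¹ |c|² = 1`. For `Z = [[0, b], [σ bᵀ, 0]] ∈ 𝔭_σ` we have `Zᵀ γ₊ = -γ₊ Z`, so
`exp Z` is an isometry; on row vectors `Z` maps `e = (0, 1)` to `(σ b, 0)` and `(b, 0)` to `|b|² e`,
a hyperbolic rotation, so the last rows of the `exp Z` sweep out the sheet `d > 0` of the
hyperboloid. Choosing `Z` with last row of `exp Z` equal to `±(c, d)`, the isometry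
`k = a exp(-Z)` has last row `±e`, and the isometry condition then forces `k` to be block diagonal
with an orthogonal block.
-/

namespace CartanDecomposition

section Isometry

variable {m R : Type*} [Fintype m] [CommRing R]

def IsIsometry (G a : Matrix m m R) : Prop := aᵀ * G * a = G

theorem IsIsometry.mul {G a b : Matrix m m R} (ha : IsIsometry G a) (hb : IsIsometry G b) :
    IsIsometry G (a * b) := by
  unfold IsIsometry at *
  rw [transpose_mul, show bᵀ * aᵀ * G * (a * b) = bᵀ * (aᵀ * G * a) * b by
    simp only [Matrix.mul_assoc], ha, hb]

variable [DecidableEq m]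

theorem IsIsometry.inv_mul_transpose_mul_mul {G a : Matrix m m R} (hG : IsUnit G)
    (ha : IsIsometry G a) : G⁻¹ * aᵀ * G * a = 1 := by
  rw [Matrix.mul_assoc, Matrix.mul_assoc, ← Matrix.mul_assoc aᵀ, show aᵀ * G * a = G from ha,
    nonsing_inv_mul _ ((isUnit_iff_isUnit_det G).mp hG)]

theorem IsIsometry.isUnit {G a : Matrix m m R} (hG : IsUnit G) (ha : IsIsometry G a) :
    IsUnit a :=
  (isUnit_iff_isUnit_det a).mpr (isUnit_det_of_left_inverse (ha.inv_mul_transpose_mul_mul hG))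

theorem IsIsometry.mul_inv_mul_transpose {G a : Matrix m m R} (hG : IsUnit G)
    (ha : IsIsometry G a) : a * G⁻¹ * aᵀ = G⁻¹ := by
  calc a * G⁻¹ * aᵀ = a * (G⁻¹ * aᵀ * G) * G⁻¹ := by
        simp only [Matrix.mul_assoc, mul_nonsing_inv _ ((isUnit_iff_isUnit_det G).mp hG),
          Matrix.mul_one]
    _ = G⁻¹ := by rw [mul_eq_one_comm.mp (ha.inv_mul_transpose_mul_mul hG), Matrix.one_mul]

end Isometry

section Exp

variable {m : Type*} [Fintype m] [DecidableEq m]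

theorem isIsometry_exp {G Z : Matrix m m ℝ} (h : G * Z = -Zᵀ * G) :
    IsIsometry G (NormedSpace.exp Z) := by
  have hG : SemiconjBy G Z (-Zᵀ) := h
  have : NormedSpace.exp (-(-Zᵀ)) * G * NormedSpace.exp Z = G := by
    open scoped Matrix.Norms.Operator in exact hG.exp_neg_mul_mul_exp_eq_self
  rwa [neg_neg, Matrix.exp_transpose] at this

theorem vecMul_exp_of_vecMul_eq {A : Matrix m m ℝ} {v w : m → ℝ} {t : ℝ}
    (hv : v ᵥ* A = t • w) (hw : w ᵥ* A = t • v) :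
    v ᵥ* NormedSpace.exp A = Real.cosh t • v + Real.sinh t • w := by
  have hpow : ∀ k : ℕ, v ᵥ* A ^ (2 * k) = t ^ (2 * k) • v ∧
      v ᵥ* A ^ (2 * k + 1) = t ^ (2 * k + 1) • w := by
    intro k
    induction k with
    | zero => simp [hv]
    | succ k ih =>
      have heven : v ᵥ* A ^ (2 * (k + 1)) = t ^ (2 * (k + 1)) • v := by
        rw [show 2 * (k + 1) = 2 * k + 1 + 1 by ring, pow_succ, ← vecMul_vecMul, ih.2,
          smul_vecMul, hw, smul_smul, ← pow_succ]
      refine ⟨heven, ?_⟩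
      rw [pow_succ, ← vecMul_vecMul, heven, smul_vecMul, hv, smul_smul, pow_succ]
  have hseries : HasSum (fun k => (k.factorial⁻¹ : ℝ) • (v ᵥ* A ^ k))
      (v ᵥ* NormedSpace.exp A) := by
    have hexp : HasSum (fun k => (k.factorial⁻¹ : ℝ) • A ^ k) (NormedSpace.exp A) := by
      open scoped Matrix.Norms.Operator in exact NormedSpace.exp_series_hasSum_exp' A
    simpa [Function.comp_def, vecMul_smul] using
      hexp.map (vecMulBilin ℝ ℝ v) (continuous_const.matrix_vecMul continuous_id)
  refine hseries.unique (HasSum.even_add_odd ?_ ?_)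
  · simpa [(hpow _).1, smul_smul, div_eq_inv_mul] using (Real.hasSum_cosh t).smul_const v
  · simpa [(hpow _).2, smul_smul, div_eq_inv_mul] using (Real.hasSum_sinh t).smul_const w

end Exp

variable {n : ℕ} {σ : ℝ}

theorem gammaPlus_mul_gammaPlus_inv (hσ : σ ≠ 0) : gammaPlus n σ * gammaPlus n σ⁻¹ = 1 := by
  simp [gammaPlus, fromBlocks_multiply, smul_smul, hσ, ← fromBlocks_one]

theorem isUnit_gammaPlus (hσ : σ ≠ 0) : IsUnit (gammaPlus n σ) :=
  (isUnit_iff_isUnit_det _).mpr (isUnit_det_of_right_inverse (gammaPlus_mul_gammaPlus_inv hσ))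

theorem inv_gammaPlus (hσ : σ ≠ 0) : (gammaPlus n σ)⁻¹ = gammaPlus n σ⁻¹ :=
  inv_eq_right_inv (gammaPlus_mul_gammaPlus_inv hσ)

theorem sumElim_dotProduct_gammaPlus_mulVec (τ : ℝ) (c : Fin n → ℝ) (d : Unit → ℝ) :
    Sum.elim c d ⬝ᵥ (gammaPlus n τ *ᵥ Sum.elim c d) = d () ^ 2 - τ * (c ⬝ᵥ c) := by
  simp [gammaPlus, fromBlocks_mulVec, dotProduct, sq, Matrix.neg_mulVec, Matrix.smul_mulVec,
    Finset.mul_sum, mul_left_comm]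
  ring

theorem IsIsometry.lastRow_dotProduct_gammaPlus_inv_mulVec (hσ : σ ≠ 0)
    {a : Matrix (Idx n) (Idx n) ℝ} (ha : IsIsometry (gammaPlus n σ) a) :
    a (Sum.inr ()) ⬝ᵥ (gammaPlus n σ⁻¹ *ᵥ a (Sum.inr ())) = 1 := by
  have h := congrFun (congrFun (ha.mul_inv_mul_transpose (isUnit_gammaPlus hσ)) (.inr ())) (.inr ())
  rw [mul_mul_apply, transpose_transpose, inv_gammaPlus hσ] at h
  simpa [gammaPlus] using h

def pMatrix (σ : ℝ) (b : Fin n → ℝ) : Matrix (Idx n) (Idx n) ℝ :=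
  fromBlocks 0 (replicateCol Unit b) (σ • replicateRow Unit b) 0

theorem gammaPlus_mul_pMatrix (b : Fin n → ℝ) :
    gammaPlus n σ * pMatrix σ b = -(pMatrix σ b)ᵀ * gammaPlus n σ := by
  simp [gammaPlus, pMatrix, fromBlocks_multiply, fromBlocks_transpose, fromBlocks_neg]

theorem sumElim_vecMul_pMatrix (b x : Fin n → ℝ) (y : ℝ) :
    Sum.elim x (fun _ => y) ᵥ* pMatrix σ b = Sum.elim ((σ * y) • b) (fun _ => x ⬝ᵥ b) := by
  ext (j | j) <;> simp [pMatrix, vecMul, dotProduct, mul_comm, mul_left_comm]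

theorem vecMul_exp_pMatrix {b x : Fin n → ℝ} {t : ℝ} (hb : σ • b = t • x) (hx : x ⬝ᵥ b = t) :
    Sum.elim 0 (fun _ => 1) ᵥ* NormedSpace.exp (pMatrix σ b) =
      Sum.elim (Real.sinh t • x) (fun _ => Real.cosh t) := by
  rw [vecMul_exp_of_vecMul_eq (w := Sum.elim x (fun _ => 0)) (t := t)]
  · ext (j | j) <;> simp
  · ext (j | j) <;> simp [sumElim_vecMul_pMatrix, hb]
  · ext (j | j) <;> simp [sumElim_vecMul_pMatrix, hx]

theorem isIsometry_of_mem_Kset {k : Matrix (Idx n) (Idx n) ℝ} (hk : k ∈ Kset n) :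
    IsIsometry (gammaPlus n σ) k := by
  obtain ⟨R, ε, hR, hε, rfl⟩ := hk
  have hε2 : ε * ε = 1 := by rcases hε with rfl | rfl <;> norm_num
  simp [IsIsometry, gammaPlus, fromBlocks_transpose, fromBlocks_multiply, smul_smul, hε2, hR]

theorem mem_Kset_of_isIsometry (hσ : σ ≠ 0) {k : Matrix (Idx n) (Idx n) ℝ} {ε : ℝ}
    (hε : ε = 1 ∨ ε = -1) (hrow : k (Sum.inr ()) = ε • (Sum.elim 0 (fun _ => 1) : Idx n → ℝ))
    (hk : IsIsometry (gammaPlus n σ) k) : k ∈ Kset n := by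
  have hε2 : ε * ε = 1 := by rcases hε with rfl | rfl <;> norm_num
  have hblocks : k = fromBlocks k.toBlocks₁₁ k.toBlocks₁₂ 0 (ε • 1) := by
    conv_lhs => rw [← fromBlocks_toBlocks k]
    congr 1 <;> ext i j
    · simpa [toBlocks₂₁] using congrFun hrow (.inl j)
    · simpa [toBlocks₂₂] using congrFun hrow (.inr j)
  set R := k.toBlocks₁₁
  set w := k.toBlocks₁₂
  rw [hblocks, IsIsometry] at hk
  have h11 := congrArg toBlocks₁₁ hk
  have h22 := congrArg toBlocks₂₂ hk
  simp [gammaPlus, fromBlocks_transpose, fromBlocks_multiply, smul_smul, hε2] at h11 h22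
  have hw : w = 0 := by
    rw [← conjTranspose_mul_self_eq_zero, conjTranspose_eq_transpose_of_trivial]
    simpa [hσ] using h22
  exact ⟨R, ε, by simpa [hσ] using h11, hε, by rw [hblocks, hw]⟩

theorem exists_eq_smul_vecMul_exp_pMatrix (hσ : 0 < σ) {r : Idx n → ℝ}
    (hr : r ⬝ᵥ (gammaPlus n σ⁻¹ *ᵥ r) = 1) :
    ∃ b : Fin n → ℝ, ∃ ε : ℝ, (ε = 1 ∨ ε = -1) ∧
      r = ε • ((Sum.elim 0 (fun _ => 1) : Idx n → ℝ) ᵥ* NormedSpace.exp (pMatrix σ b)) := by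
  set c : Fin n → ℝ := r ∘ Sum.inl
  set d : ℝ := r (Sum.inr ())
  have hr_eq : r = Sum.elim c (fun _ => d) := by ext (j | j) <;> rfl
  rw [hr_eq, sumElim_dotProduct_gammaPlus_mulVec] at hr
  rw [hr_eq]
  obtain ⟨ε, hε, hdε⟩ : ∃ ε : ℝ, (ε = 1 ∨ ε = -1) ∧ d = ε * |d| := by
    rcases abs_choice d with h | h
    · exact ⟨1, .inl rfl, by rw [h, one_mul]⟩
    · exact ⟨-1, .inr rfl, by rw [h]; ring⟩
  have hε2 : ε ^ 2 = 1 := by rcases hε with rfl | rfl <;> norm_num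
  have hcc : 0 ≤ c ⬝ᵥ c := by simpa using dotProduct_self_star_nonneg c
  set s := √(σ⁻¹ * (c ⬝ᵥ c))
  have hs2 : s ^ 2 = σ⁻¹ * (c ⬝ᵥ c) := Real.sq_sqrt (by positivity)
  set t := Real.arsinh s
  have hcosh : Real.cosh t = |d| := by
    rw [Real.cosh_arsinh, hs2, ← hr, sub_add_cancel, Real.sqrt_sq_eq_abs]
  rcases eq_or_ne c 0 with hc | hc
  · have ht : t = 0 := by simp [t, s, hc]
    refine ⟨0, ε, hε, ?_⟩
    rw [vecMul_exp_pMatrix (x := 0) (t := t) (by simp) (by simp [ht])]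
    ext (j | j) <;> simp [hc, hcosh, ← hdε]
  · have hs : s ≠ 0 := by
      have : 0 < c ⬝ᵥ c := by simpa using dotProduct_self_star_pos_iff.mpr hc
      positivity
    -- `sinh t = s` and `|x|² = σ` for `x = (ε / s) • c`, so `ε sinh t • x = c` and `x ⬝ᵥ b = t`.
    refine ⟨(t / σ) • (ε / s) • c, ε, hε, ?_⟩
    rw [vecMul_exp_pMatrix (x := (ε / s) • c) (t := t) ?_ ?_]
    · ext (j | j)
      · simp [t, Real.sinh_arsinh]
        field_simp
        rw [hε2, mul_one]
      · simp [hcosh, ← hdε]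
    · rw [smul_smul, mul_div_cancel₀ _ hσ.ne']
    · simp only [dotProduct_smul, smul_dotProduct, smul_eq_mul]
      field_simp
      rw [hε2, hs2]
      field_simp

end CartanDecomposition

open CartanDecomposition

theorem stmt15_general (n : ℕ) (σ : ℝ) (hσ : 0 < σ) :
    { a : Matrix (Idx n) (Idx n) ℝ | IsUnit a ∧
        aᵀ * gammaPlus n σ * a = gammaPlus n σ } =
    { a : Matrix (Idx n) (Idx n) ℝ | ∃ k ∈ Kset n, ∃ Z ∈ pSet n σ,
        a = k * NormedSpace.exp Z } := by
  ext a
  constructor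
  · rintro ⟨-, ha : IsIsometry (gammaPlus n σ) a⟩
    obtain ⟨b, ε, hε, hrow⟩ :=
      exists_eq_smul_vecMul_exp_pMatrix hσ (ha.lastRow_dotProduct_gammaPlus_inv_mulVec hσ.ne')
    set Z := pMatrix σ b
    have hZ : gammaPlus n σ * -Z = -(-Z)ᵀ * gammaPlus n σ := by
      simp only [Z, Matrix.mul_neg, gammaPlus_mul_pMatrix, transpose_neg, Matrix.neg_mul]
    have hexp : NormedSpace.exp Z * NormedSpace.exp (-Z) = 1 := by
      rw [← Matrix.exp_add_of_commute _ _ (Commute.refl Z).neg_right, add_neg_cancel,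
        NormedSpace.exp_zero]
    refine ⟨a * NormedSpace.exp (-Z), mem_Kset_of_isIsometry hσ.ne' hε ?_
      (ha.mul (isIsometry_exp hZ)), Z, ⟨b, rfl⟩, ?_⟩
    · rw [mul_apply_eq_vecMul, hrow, smul_vecMul, vecMul_vecMul, hexp, vecMul_one]
    · rw [Matrix.mul_assoc, ← Matrix.exp_add_of_commute _ _ (Commute.refl Z).neg_left,
        neg_add_cancel, NormedSpace.exp_zero, Matrix.mul_one]
  · rintro ⟨k, hk, _, ⟨b, rfl⟩, rfl⟩
    have h : IsIsometry (gammaPlus n σ) (k * NormedSpace.exp (pMatrix σ b)) :=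
      (isIsometry_of_mem_Kset hk).mul (isIsometry_exp (gammaPlus_mul_pMatrix b))
    exact ⟨h.isUnit (isUnit_gammaPlus hσ.ne'), h⟩

theorem stmt15 (n : ℕ) (hn : 1 ≤ n) (σ : ℝ) (hσ : 0 < σ) :
    { a : Matrix (Idx n) (Idx n) ℝ | IsUnit a ∧
        aᵀ * gammaPlus n σ * a = gammaPlus n σ } =
    { a : Matrix (Idx n) (Idx n) ℝ | ∃ k ∈ Kset n, ∃ Z ∈ pSet n σ,
        a = k * NormedSpace.exp Z } :=
  stmt15_general n σ hσ
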